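/- arXiv:1506.04598 — 3 statements merged into one kernel-verified Lean document; each statement's English description precedes it below -/
import Mathlib

section
/- Let 𝔄 be an excellent based A-algebra, 𝐜 a two-sided cell of I, and a the common value of the a-function on 𝐜. Let r ≥ 1 and (i_1, …, i_r) ∈ I^r with i_u ∈ 𝐜 for all u, and write b_{i_1} ⋯ b_{i_r} = Σ_{i∈I, k∈ℤ} N(i,k) v^k b_i. Then for every i ∈ 𝐜, N(i, −(r−1)a) = Σ h*_{j_1,i_2,j_2^!} h*_{j_2,i_3,j_3^!} ⋯ h*_{j_{r−1},i_r,j_r^!}, the sum over all (j_1, j_2, …, j_r) ∈ 𝐜^r with j_1 = i_1 and j_r = i. Equivalently, in the asymptotic ring 𝔄^∞ one has t_{i_1} t_{i_2} ⋯ t_{i_r} = Σ_{i∈𝐜} N(i, −(r−1)a) t_i. -/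
open scoped Classical
open Finset
open Fin.NatCast

noncomputable section

/-- The ring `A = ℤ[v,v⁻¹]` of Laurent polynomials over `ℤ`. -/
abbrev LP : Type := LaurentPolynomial ℤ

/-- The coefficient of `v^n` in a Laurent polynomial. -/
def lcoeff (f : LP) (n : ℤ) : ℤ := (AddMonoidAlgebra.coeff f : ℤ →₀ ℤ) n

/-- A based `A`-algebra (Lusztig, 1.9), encoded by its structure constants
`h i i' j` (the coefficient of `b j` in `b i * b i'`), the coordinates `e i` of the
unit element, the involution `einv` of the index set (written `i ↦ i^!`), and the
distinguished subset `I0` of `{i | i^! = i}`. -/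
structure BasedAlgebra (I : Type) [Fintype I] [DecidableEq I] where
  h : I → I → I → LP
  e : I → LP
  einv : I → I
  I0 : Finset I
  einv_invol : ∀ i, einv (einv i) = i
  mul_assoc' : ∀ i j k l, ∑ m, h i j m * h m k l = ∑ m, h j k m * h i m l
  one_mul' : ∀ j k, ∑ i, e i * h i j k = if j = k then 1 else 0
  mul_one' : ∀ j k, ∑ i, e i * h j i k = if j = k then 1 else 0
  anti' : ∀ i i' j, h (einv i) (einv i') (einv j) = h i' i j
  I0_fixed : ∀ i ∈ I0, einv i = i

namespace BasedAlgebra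

variable {I : Type} [Fintype I] [DecidableEq I]

/-- The preorder `⪯_left` on `I`, generated by: `j ⪯_left i` if `h i' i j ≠ 0` for some `i'`. -/
def leLeft (B : BasedAlgebra I) : I → I → Prop :=
  Relation.ReflTransGen (fun j i => ∃ i', B.h i' i j ≠ 0)

/-- The preorder `⪯` on `I`, generated by:
`j ⪯ i` if `h i i' j ≠ 0` or `h i' i j ≠ 0` for some `i'`. -/
def leTwo (B : BasedAlgebra I) : I → I → Prop :=
  Relation.ReflTransGen (fun j i => ∃ i', B.h i i' j ≠ 0 ∨ B.h i' i j ≠ 0)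

/-- The equivalence relation `∼_left` whose classes are the left cells. -/
def simLeft (B : BasedAlgebra I) (i j : I) : Prop := B.leLeft i j ∧ B.leLeft j i

/-- The equivalence relation `∼` whose classes are the two-sided cells. -/
def simTwo (B : BasedAlgebra I) (i j : I) : Prop := B.leTwo i j ∧ B.leTwo j i

/-- `c` is a left cell. -/
def IsLeftCell (B : BasedAlgebra I) (c : Set I) : Prop := ∃ i, c = {j | B.simLeft j i}

/-- `c` is a two-sided cell. -/
def IsTwoCell (B : BasedAlgebra I) (c : Set I) : Prop := ∃ i, c = {j | B.simTwo j i}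

/-- Lusztig's `a`-function: `a j` is the smallest `m : ℕ` such that
`h i i' j ∈ v^{-m} ℤ[v]` for all `i, i'`. -/
def af (B : BasedAlgebra I) (j : I) : ℕ :=
  sInf {m : ℕ | ∀ i i' : I, ∀ n : ℤ, n < -(m : ℤ) → lcoeff (B.h i i' j) n = 0}

/-- The leading coefficients: `h i i' (j^!) = (hstar i i' j) v^{-a(j^!)} +` higher powers. -/
def hstar (B : BasedAlgebra I) (i i' j : I) : ℤ :=
  lcoeff (B.h i i' (B.einv j)) (-(B.af (B.einv j) : ℤ))

/-- The based algebra is *excellent* if properties Q1–Q11 of Lusztig (1.9) hold. -/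
structure Excellent (B : BasedAlgebra I) : Prop where
  q1 : ∀ j ∈ B.I0, ∀ i i', B.hstar i i' j ≠ 0 → i' = B.einv i
  q2 : ∀ i, ∃! j, j ∈ B.I0 ∧ B.hstar (B.einv i) i j ≠ 0
  q3 : ∀ i' i, B.leTwo i' i → B.af i ≤ B.af i'
  q4 : ∀ j ∈ B.I0, ∀ i, B.hstar (B.einv i) i j ≠ 0 → B.hstar (B.einv i) i j = 1
  q5 : ∀ i j k, B.hstar i j k = B.hstar j k i
  q6 : ∀ i j k, B.hstar i j k ≠ 0 →
    B.simLeft i (B.einv j) ∧ B.simLeft j (B.einv k) ∧ B.simLeft k (B.einv i)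
  q7 : ∀ i' i, B.leLeft i' i → B.af i' = B.af i → B.simLeft i' i
  q8 : ∀ i' i, B.leTwo i' i → B.af i' = B.af i → B.simTwo i' i
  q9a : ∀ i, ∃! j, j ∈ B.I0 ∧ B.simLeft j i
  q9b : ∀ i j, j ∈ B.I0 → B.simLeft j i → B.hstar (B.einv i) i j = 1
  q10 : ∀ i, B.simTwo i (B.einv i)
  q11 : ∀ i i' j k, B.af j = B.af k → ∀ p q : ℤ,
    ∑ j', lcoeff (B.h k i' j') p * lcoeff (B.h i j' j) q
      = ∑ j', lcoeff (B.h i k j') q * lcoeff (B.h j' i' j) p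

/-- The multiplication of the asymptotic ring `𝔄^∞`, on coordinates with respect to the
basis `{t_i}`: `t_i t_{i'} = ∑_j h*_{i,i',j^!} t_j`. -/
def tmul (B : BasedAlgebra I) (x y : I → ℤ) : I → ℤ :=
  fun j => ∑ i, ∑ i', x i * y i' * B.hstar i i' (B.einv j)

/-- The element `∑_{i ∈ I₀} t_i` of `𝔄^∞`. -/
def tone (B : BasedAlgebra I) : I → ℤ := fun i => if i ∈ B.I0 then 1 else 0

/-- The basis element `t_i` of `𝔄^∞`. -/
def tbasis (B : BasedAlgebra I) (i : I) : I → ℤ := fun j => if j = i then 1 else 0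

end BasedAlgebra

namespace BasedAlgebra

variable {I : Type} [Fintype I] [DecidableEq I]

/-- The coordinates of the basis element `b_i` of `𝔄`. -/
def bvec (_B : BasedAlgebra I) (i : I) : I → LP := fun j => if j = i then 1 else 0

/-- Multiplication of `𝔄`, on coordinates with respect to the basis `{b_i}`. -/
def amul (B : BasedAlgebra I) (x y : I → LP) : I → LP :=
  fun j => ∑ i, ∑ i', x i * y i' * B.h i i' j

/-- The product `b_{f 0} b_{f 1} ⋯ b_{f (n-1)}` in `𝔄`, on coordinates. -/
def aprod (B : BasedAlgebra I) (f : ℕ → I) : ℕ → (I → LP)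
  | 0 => B.e
  | n + 1 => B.amul (B.aprod f n) (B.bvec (f n))

/-- The product `t_{f 0} t_{f 1} ⋯ t_{f (n-1)}` in `𝔄^∞`, on coordinates. -/
def tprod (B : BasedAlgebra I) (f : ℕ → I) : ℕ → (I → ℤ)
  | 0 => B.tone
  | n + 1 => B.tmul (B.tprod f n) (B.tbasis (f n))

end BasedAlgebra

/-! Multiply `b_{i_1} ⋯ b_{i_r}` out one factor at a time. Every index occurring in the product is
`⪯ i_1`, so by Q3 and Q8 only indices of the cell `𝐜` feed into coefficients at `𝐜`. There each
structure constant `h_{k,i_u,i}` lies in `v^{-a} ℤ[v]` with `v^{-a}`-coefficient `h*_{k,i_u,i^!}`,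
so by induction the product lies in `v^{-(r-1)a} ℤ[v]` at `𝐜`, and its lowest coefficients obey
the recursion of `t_{i_1} ⋯ t_{i_r}` (Q1, Q2, Q4, Q5 make `∑_{I₀} t_i` a left unit). Unfolding
that recursion gives a sum over paths, and by Q6 a path leaving `𝐜` has weight zero. -/

/-- `f ∈ v^m ℤ[v]`. -/
def VanishesBelow (f : LP) (m : ℤ) : Prop := ∀ n < m, lcoeff f n = 0

theorem lcoeff_one (n : ℤ) : lcoeff 1 n = if n = 0 then 1 else 0 := by
  rw [lcoeff, ← LaurentPolynomial.T_zero, LaurentPolynomial.T_apply]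
  simp only [eq_comm]

theorem lcoeff_sum {ι : Type*} (s : Finset ι) (F : ι → LP) (n : ℤ) :
    lcoeff (∑ k ∈ s, F k) n = ∑ k ∈ s, lcoeff (F k) n := by
  rw [lcoeff, AddMonoidAlgebra.coeff_sum, Finsupp.finsetSum_apply]; rfl

namespace VanishesBelow

theorem sum {ι : Type*} {s : Finset ι} {F : ι → LP} {m : ℤ}
    (hF : ∀ k ∈ s, VanishesBelow (F k) m) : VanishesBelow (∑ k ∈ s, F k) m := fun n hn => by
  rw [lcoeff_sum]; exact Finset.sum_eq_zero fun k hk => hF k hk n hn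

theorem mul {f g : LP} {a b : ℤ} (hf : VanishesBelow f a) (hg : VanishesBelow g b) :
    VanishesBelow (f * g) (a + b) := fun n hn => by
  rw [lcoeff, AddMonoidAlgebra.coeff_mul, Finsupp.sum]
  refine Finset.sum_eq_zero fun p hp => Finset.sum_eq_zero fun q hq => if_neg ?_
  have hpa := not_lt.mp (mt (hf p) (Finsupp.mem_support_iff.mp hp))
  have hqb := not_lt.mp (mt (hg q) (Finsupp.mem_support_iff.mp hq))
  omega

theorem lcoeff_mul {f g : LP} {a b : ℤ} (hf : VanishesBelow f a) (hg : VanishesBelow g b) :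
    lcoeff (f * g) (a + b) = lcoeff f a * lcoeff g b := by
  refine AddMonoidAlgebra.coeff_mul_add_of_uniqueAdd fun p q hp hq hpq => ?_
  have hpa := not_lt.mp (mt (hf p) (Finsupp.mem_support_iff.mp hp))
  have hqb := not_lt.mp (mt (hg q) (Finsupp.mem_support_iff.mp hq))
  omega

end VanishesBelow

theorem exists_vanishesBelow {ι : Type*} [Fintype ι] (F : ι → LP) :
    ∃ m : ℕ, ∀ k, VanishesBelow (F k) (-m) := by
  refine ⟨univ.sup fun k => (F k).coeff.support.sup Int.natAbs, fun k n hn => ?_⟩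
  by_contra hne
  have := (Finset.le_sup (Finsupp.mem_support_iff.mpr hne)).trans
    (Finset.le_sup (f := fun k => (F k).coeff.support.sup Int.natAbs) (mem_univ k))
  omega

namespace BasedAlgebra

variable {I : Type} [Fintype I] [DecidableEq I] (B : BasedAlgebra I)

theorem vanishesBelow_h (i i' j : I) : VanishesBelow (B.h i i' j) (-(B.af j : ℤ)) := by
  obtain ⟨m, hm⟩ := exists_vanishesBelow fun p : I × I => B.h p.1 p.2 j
  exact Nat.sInf_mem (s := {m : ℕ | ∀ i i' : I, VanishesBelow (B.h i i' j) (-(m : ℤ))})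
    ⟨m, fun i i' => hm (i, i')⟩ i i'

theorem hstar_einv (i i' j : I) :
    B.hstar i i' (B.einv j) = lcoeff (B.h i i' j) (-(B.af j : ℤ)) := by
  rw [hstar, B.einv_invol]

theorem leTwo_of_h_ne_zero {i i' j : I} (h : B.h i i' j ≠ 0) : B.leTwo j i :=
  Relation.ReflTransGen.single ⟨i', Or.inl h⟩

theorem leTwo_of_leLeft {i j : I} (h : B.leLeft i j) : B.leTwo i j :=
  Relation.ReflTransGen.mono (fun _ _ ⟨i', hi'⟩ => ⟨i', Or.inr hi'⟩) _ _ h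

theorem simTwo_of_simLeft {i j : I} (h : B.simLeft i j) : B.simTwo i j :=
  ⟨B.leTwo_of_leLeft h.1, B.leTwo_of_leLeft h.2⟩

theorem simTwo_trans {i j k : I} (h₁ : B.simTwo i j) (h₂ : B.simTwo j k) : B.simTwo i k :=
  ⟨h₁.1.trans h₂.1, h₂.2.trans h₁.2⟩

variable {B}

theorem IsTwoCell.mem_of_simTwo {c : Set I} (hc : B.IsTwoCell c) {i j : I} (hi : i ∈ c)
    (hji : B.simTwo j i) : j ∈ c := by
  obtain ⟨i₀, rfl⟩ := hc
  exact B.simTwo_trans hji hi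

theorem IsTwoCell.simTwo {c : Set I} (hc : B.IsTwoCell c) {i j : I} (hi : i ∈ c) (hj : j ∈ c) :
    B.simTwo i j := by
  obtain ⟨i₀, rfl⟩ := hc
  exact B.simTwo_trans hi ⟨hj.2, hj.1⟩

namespace Excellent

theorem mem_of_leTwo_of_leTwo (hB : B.Excellent) {c : Set I} (hc : B.IsTwoCell c) {i j k : I}
    (hj : j ∈ c) (hk : k ∈ c) (hji : B.leTwo j i) (hik : B.leTwo i k) : i ∈ c := by
  have hjk := hc.simTwo hj hk
  have := hB.q3 _ _ hji
  have := hB.q3 _ _ hik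
  have := hB.q3 _ _ hjk.1
  have := hB.q3 _ _ hjk.2
  have hij := hB.q8 j i hji (by omega)
  exact hc.mem_of_simTwo hj ⟨hij.2, hij.1⟩

theorem mem_of_hstar_ne_zero (hB : B.Excellent) {c : Set I} (hc : B.IsTwoCell c) {i j k : I}
    (hk : k ∈ c) (h : B.hstar i k (B.einv j) ≠ 0) : j ∈ c := by
  have hkj := (hB.q6 _ _ _ h).2.1
  rw [B.einv_invol] at hkj
  exact hc.mem_of_simTwo hk (B.simTwo_of_simLeft ⟨hkj.2, hkj.1⟩)

end Excellent

theorem amul_bvec (x : I → LP) (k j : I) : B.amul x (B.bvec k) j = ∑ i, x i * B.h i k j := by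
  simp [amul, bvec]

theorem tmul_tbasis (x : I → ℤ) (k j : I) :
    B.tmul x (B.tbasis k) j = ∑ i, x i * B.hstar i k (B.einv j) := by
  simp [tmul, tbasis]

theorem e_amul (x : I → LP) : B.amul B.e x = x := by
  funext j
  calc B.amul B.e x j = ∑ i', x i' * ∑ i, B.e i * B.h i i' j := by
        rw [amul, sum_comm]
        simp only [mul_sum]
        exact sum_congr rfl fun _ _ => sum_congr rfl fun _ _ => by ring
    _ = x j := by simp [B.one_mul']

theorem Excellent.sum_hstar_I0 (hB : B.Excellent) (k j : I) :
    ∑ i ∈ B.I0, B.hstar i k (B.einv j) = if k = j then 1 else 0 := by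
  simp_rw [hB.q5 _ k]
  split_ifs with hkj
  · subst hkj
    obtain ⟨j₀, ⟨hj₀, hne⟩, huniq⟩ := hB.q2 (B.einv k)
    rw [B.einv_invol] at hne huniq
    rw [sum_eq_single_of_mem j₀ hj₀ fun i hi hij =>
      by_contra fun h => hij (huniq i ⟨hi, h⟩)]
    simpa [B.einv_invol] using hB.q4 j₀ hj₀ (B.einv k) (by rwa [B.einv_invol])
  · refine sum_eq_zero fun i hi => by_contra fun h => hkj ?_
    simpa [B.einv_invol] using (congrArg B.einv (hB.q1 i hi k (B.einv j) h)).symm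

theorem Excellent.tone_tmul (hB : B.Excellent) (x : I → ℤ) : B.tmul B.tone x = x := by
  funext j
  calc B.tmul B.tone x j = ∑ i', x i' * ∑ i ∈ B.I0, B.hstar i i' (B.einv j) := by
        rw [tmul, sum_comm]
        simp only [tone, mul_sum, ite_mul, one_mul, zero_mul, sum_ite_mem, univ_inter]
    _ = x j := by simp [hB.sum_hstar_I0]

theorem aprod_succ (f : ℕ → I) (n : ℕ) (j : I) :
    B.aprod f (n + 1) j = ∑ i, B.aprod f n i * B.h i (f n) j :=
  amul_bvec _ _ _

theorem tprod_succ (f : ℕ → I) (n : ℕ) (j : I) :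
    B.tprod f (n + 1) j = ∑ i, B.tprod f n i * B.hstar i (f n) (B.einv j) :=
  tmul_tbasis _ _ _

theorem aprod_one (f : ℕ → I) : B.aprod f 1 = B.bvec (f 0) :=
  e_amul _

theorem Excellent.tprod_one (hB : B.Excellent) (f : ℕ → I) : B.tprod f 1 = B.tbasis (f 0) :=
  hB.tone_tmul _

theorem leTwo_of_aprod_ne_zero (f : ℕ → I) (n : ℕ) {i : I} (h : B.aprod f (n + 1) i ≠ 0) :
    B.leTwo i (f 0) := by
  induction n generalizing i with
  | zero =>
    rw [zero_add, aprod_one] at h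
    have hi : i = f 0 := by_contra fun hne => h (if_neg hne)
    exact hi ▸ Relation.ReflTransGen.refl
  | succ n ih =>
    rw [aprod_succ] at h
    obtain ⟨k, -, hk⟩ := exists_ne_zero_of_sum_ne_zero h
    exact (B.leTwo_of_h_ne_zero (right_ne_zero_of_mul hk)).trans (ih (left_ne_zero_of_mul hk))

end BasedAlgebra

section Paths

variable {I : Type*}

theorem prod_range_eq_prod_fin {M : Type*} [CommMonoid M] (F : ℕ → I → I → M) (r : ℕ)
    (p : Fin (r + 1) → I) :
    ∏ u ∈ range r, F u (p u) (p ((u + 1 : ℕ) : Fin (r + 1))) =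
      ∏ u : Fin r, F u (p u.castSucc) (p u.succ) := by
  rw [← Fin.prod_univ_eq_prod_range]
  refine prod_congr rfl fun u _ => ?_
  simp [Fin.coeSucc_eq_succ]

variable [Fintype I] [DecidableEq I]

theorem eq_sum_paths {R : Type*} [CommSemiring R] (v : ℕ → I → R) (M : ℕ → I → I → R)
    (hv : ∀ n j, v (n + 1) j = ∑ i, v n i * M n i j) (r : ℕ) (i : I) :
    v r i = ∑ p : Fin (r + 1) → I,
      if p (Fin.last r) = i then v 0 (p 0) * ∏ u : Fin r, M u (p u.castSucc) (p u.succ)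
      else 0 := by
  induction r generalizing i with
  | zero =>
    rw [← (Equiv.funUnique (Fin 1) I).symm.sum_comp]
    simp
  | succ r ih =>
    rw [← (Fin.snocEquiv fun _ => I).sum_comp, Fintype.sum_prod_type, sum_comm, hv]
    simp only [ih, sum_mul, ite_mul, zero_mul]
    rw [sum_comm]
    refine sum_congr rfl fun p _ => ?_
    simp only [Fin.snocEquiv_apply, Fin.snoc_last, Fin.snoc_apply_zero, Fin.prod_univ_castSucc,
      Fin.val_last, Fin.val_castSucc, Fin.succ_last, Fin.succ_castSucc, Fin.snoc_castSucc,
      sum_ite_eq, sum_ite_eq', mem_univ, if_true, mul_assoc]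

end Paths

namespace BasedAlgebra.Excellent

variable {I : Type} [Fintype I] [DecidableEq I] {B : BasedAlgebra I}

theorem mem_of_prod_hstar_ne_zero (hB : B.Excellent) {c : Set I} (hc : B.IsTwoCell c)
    {f : ℕ → I} {r : ℕ} (hf : ∀ u ≤ r, f u ∈ c) {p : Fin (r + 1) → I} (hp : p 0 ∈ c)
    (h : ∏ u : Fin r, B.hstar (p u.castSucc) (f (u + 1)) (B.einv (p u.succ)) ≠ 0)
    (u : Fin (r + 1)) : p u ∈ c := by
  induction u using Fin.cases with
  | zero => exact hp
  | succ w =>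
    exact hB.mem_of_hstar_ne_zero hc (hf _ w.isLt) (prod_ne_zero_iff.mp h w (mem_univ w))

theorem tprod_eq_sum_paths (hB : B.Excellent) {c : Set I} (hc : B.IsTwoCell c) {f : ℕ → I}
    {r : ℕ} (hf : ∀ u ≤ r, f u ∈ c) (i : I) :
    B.tprod f (r + 1) i = ∑ p : Fin (r + 1) → I,
      if (∀ u, p u ∈ c) ∧ p 0 = f 0 ∧ p (Fin.last r) = i then
        ∏ u ∈ range r, B.hstar (p u) (f (u + 1)) (B.einv (p ((u + 1 : ℕ) : Fin (r + 1))))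
      else 0 := by
  rw [eq_sum_paths (fun n => B.tprod f (n + 1)) (fun n i j => B.hstar i (f (n + 1)) (B.einv j))
    (fun n j => tprod_succ f (n + 1) j), hB.tprod_one]
  refine sum_congr rfl fun p _ => ?_
  rw [prod_range_eq_prod_fin (fun u i j => B.hstar i (f (u + 1)) (B.einv j))]
  simp only [tbasis, ite_mul, one_mul, zero_mul]
  by_cases hpc : ∀ u, p u ∈ c
  · split_ifs <;> simp_all
  · have hprod : p 0 = f 0 →
        ∏ u : Fin r, B.hstar (p u.castSucc) (f (u + 1)) (B.einv (p u.succ)) = 0 := fun hp0 =>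
      by_contra fun h => hpc (hB.mem_of_prod_hstar_ne_zero hc hf (hp0 ▸ hf 0 r.zero_le) h)
    split_ifs <;> simp_all

theorem tprod_eq_zero_of_not_mem (hB : B.Excellent) {c : Set I} (hc : B.IsTwoCell c)
    {f : ℕ → I} {r : ℕ} (hf : ∀ u ≤ r, f u ∈ c) {i : I} (hi : i ∉ c) :
    B.tprod f (r + 1) i = 0 := by
  rw [hB.tprod_eq_sum_paths hc hf]
  exact sum_eq_zero fun p _ => if_neg fun ⟨hpc, _, hpi⟩ => hi (hpi ▸ hpc _)

theorem aprod_mul_h_eq_zero (hB : B.Excellent) {c : Set I} (hc : B.IsTwoCell c) {f : ℕ → I}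
    (hf0 : f 0 ∈ c) (n : ℕ) {i j k : I} (hj : j ∈ c) (hi : i ∉ c) :
    B.aprod f (n + 1) i * B.h i k j = 0 :=
  by_contra fun hne => hi <| hB.mem_of_leTwo_of_leTwo hc hj hf0
    (B.leTwo_of_h_ne_zero (right_ne_zero_of_mul hne))
    (leTwo_of_aprod_ne_zero f n (left_ne_zero_of_mul hne))

theorem aprod_lowest_coeff (hB : B.Excellent) {c : Set I} (hc : B.IsTwoCell c) {a0 : ℕ}
    (ha0 : ∀ i ∈ c, B.af i = a0) {f : ℕ → I} {n : ℕ} (hf : ∀ u ≤ n, f u ∈ c) {i : I}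
    (hi : i ∈ c) :
    VanishesBelow (B.aprod f (n + 1) i) (-((n : ℤ) * (a0 : ℤ))) ∧
      lcoeff (B.aprod f (n + 1) i) (-((n : ℤ) * (a0 : ℤ))) = B.tprod f (n + 1) i := by
  induction n generalizing i with
  | zero =>
    rw [aprod_one, hB.tprod_one]
    simp only [bvec, tbasis, Nat.cast_zero, zero_mul, neg_zero]
    split_ifs
    · exact ⟨fun m hm => by simp [lcoeff_one, hm.ne], by simp [lcoeff_one]⟩
    · exact ⟨fun _ _ => rfl, rfl⟩
  | succ n ih =>
    have hf' : ∀ u ≤ n, f u ∈ c := fun u hu => hf u (hu.trans n.le_succ)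
    have hterm : ∀ k,
        VanishesBelow (B.aprod f (n + 1) k * B.h k (f (n + 1)) i) (-(n * a0 : ℤ) + -a0) ∧
        lcoeff (B.aprod f (n + 1) k * B.h k (f (n + 1)) i) (-(n * a0 : ℤ) + -a0) =
          B.tprod f (n + 1) k * B.hstar k (f (n + 1)) (B.einv i) := by
      intro k
      by_cases hk : k ∈ c
      · obtain ⟨hlow, hcoeff⟩ := ih hf' hk
        have hh := B.vanishesBelow_h k (f (n + 1)) i
        rw [ha0 i hi] at hh
        exact ⟨hlow.mul hh, by rw [hlow.lcoeff_mul hh, hcoeff, B.hstar_einv, ha0 i hi]⟩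
      · rw [hB.aprod_mul_h_eq_zero hc (hf 0 n.succ.zero_le) n hi hk,
          hB.tprod_eq_zero_of_not_mem hc hf' hk, zero_mul]
        exact ⟨fun _ _ => rfl, rfl⟩
    rw [aprod_succ, tprod_succ, lcoeff_sum,
      show -(((n + 1 : ℕ) : ℤ) * a0) = -(n * a0 : ℤ) + -a0 by push_cast; ring]
    exact ⟨VanishesBelow.sum fun k _ => (hterm k).1, sum_congr rfl fun k _ => (hterm k).2⟩

end BasedAlgebra.Excellent

/-- Here `r = r0 + 1` and `i_u = f (u - 1)`. -/
theorem statement7 {I : Type} [Fintype I] [DecidableEq I]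
    (B : BasedAlgebra I) (hB : B.Excellent)
    (c : Set I) (hc : B.IsTwoCell c) (a0 : ℕ) (ha0 : ∀ i ∈ c, B.af i = a0)
    (r0 : ℕ) (f : ℕ → I) (hf : ∀ u ≤ r0, f u ∈ c) :
    (∀ i ∈ c,
      lcoeff (B.aprod f (r0 + 1) i) (-((r0 : ℤ) * (a0 : ℤ))) =
        ∑ j : Fin (r0 + 1) → I,
          if (∀ u, j u ∈ c) ∧ j 0 = f 0 ∧ j (Fin.last r0) = i then
            ∏ u ∈ Finset.range r0,
              B.hstar (j (u : Fin (r0 + 1))) (f (u + 1))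
                (B.einv (j ((u + 1 : ℕ) : Fin (r0 + 1))))
          else 0) ∧
    (B.tprod f (r0 + 1) =
      fun i => if i ∈ c then lcoeff (B.aprod f (r0 + 1) i) (-((r0 : ℤ) * (a0 : ℤ))) else 0) := by
  have hlowest : ∀ i ∈ c,
      lcoeff (B.aprod f (r0 + 1) i) (-((r0 : ℤ) * (a0 : ℤ))) = B.tprod f (r0 + 1) i :=
    fun i hi => (hB.aprod_lowest_coeff hc ha0 hf hi).2
  refine ⟨fun i hi => (hlowest i hi).trans (hB.tprod_eq_sum_paths hc hf i), funext fun i => ?_⟩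
  split_ifs with hi
  · exact (hlowest i hi).symm
  · exact hB.tprod_eq_zero_of_not_mem hc hf hi
end
end

section
/- Let 𝔄 be an excellent based A-algebra. Then: (i) every two-sided cell of I contains an element of I₀; (ii) for all i, j ∈ I, i ⪯ j if and only if i^! ⪯ j^!, so the involution i ↦ i^! preserves the preorder ⪯; (iii) the involution i ↦ i^! maps each two-sided cell of I onto itself; (iv) a(i^!) = a(i) for all i ∈ I, and the a-function is constant on each two-sided cell. -/
open scoped Classical
open Finset

noncomputable section

/-! The antiautomorphism `b_i ↦ b_{i^!}` exchanges left and right multiplication, so it maps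
the generating relations of `⪯` to each other. The rest is formal: by Q3 applied in both
directions `a` is constant on two-sided cells, the element of `I₀` given by Q9 lies in the left
cell, hence in the two-sided cell, of `i`, and Q10 puts `i^!` in the two-sided cell of `i`. -/

namespace BasedAlgebra

variable {I : Type} [Fintype I] [DecidableEq I] {B : BasedAlgebra I} {i j k : I}

theorem leLeft.leTwo (h : B.leLeft i j) : B.leTwo i j :=
  Relation.ReflTransGen.mono (fun _ _ ⟨i', hi'⟩ => ⟨i', Or.inr hi'⟩) _ _ h

theorem simLeft.simTwo (h : B.simLeft i j) : B.simTwo i j :=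
  ⟨h.1.leTwo, h.2.leTwo⟩

theorem simTwo.symm (h : B.simTwo i j) : B.simTwo j i :=
  ⟨h.2, h.1⟩

theorem simTwo.trans (hij : B.simTwo i j) (hjk : B.simTwo j k) : B.simTwo i k :=
  ⟨hij.1.trans hjk.1, hjk.2.trans hij.2⟩

theorem leTwo.einv (h : B.leTwo i j) : B.leTwo (B.einv i) (B.einv j) := by
  refine Relation.ReflTransGen.lift B.einv (fun _ _ ⟨i', hi'⟩ => ⟨B.einv i', ?_⟩) _ _ h
  rw [B.anti', B.anti']
  exact hi'.symm

theorem leTwo_einv_iff : B.leTwo (B.einv i) (B.einv j) ↔ B.leTwo i j :=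
  ⟨fun h => by simpa only [B.einv_invol] using h.einv, leTwo.einv⟩

namespace Excellent

theorem af_eq_of_simTwo (hB : B.Excellent) (h : B.simTwo i j) : B.af i = B.af j :=
  le_antisymm (hB.q3 j i h.2) (hB.q3 i j h.1)

theorem exists_mem_I0_simTwo (hB : B.Excellent) (i : I) : ∃ j ∈ B.I0, B.simTwo j i := by
  obtain ⟨j, ⟨hj, hji⟩, -⟩ := hB.q9a i
  exact ⟨j, hj, hji.simTwo⟩

theorem einv_simTwo (hB : B.Excellent) (i : I) : B.simTwo (B.einv i) i :=
  (hB.q10 i).symm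

theorem af_einv (hB : B.Excellent) (i : I) : B.af (B.einv i) = B.af i :=
  hB.af_eq_of_simTwo (hB.einv_simTwo i)

end Excellent

end BasedAlgebra

/-- Lusztig 1.15. For an excellent based `A`-algebra: (i) every two-sided
cell contains an element of `I₀`; (ii) `i ⪯ j ↔ i^! ⪯ j^!`, so `i ↦ i^!` preserves the
preorder `⪯`; (iii) the involution maps each two-sided cell onto itself; (iv) `a(i^!) = a(i)`
for all `i`, and the `a`-function is constant on each two-sided cell. -/
theorem statement13 {I : Type} [Fintype I] [DecidableEq I]
    (B : BasedAlgebra I) (hB : B.Excellent) :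
    (∀ c : Set I, B.IsTwoCell c → ∃ i ∈ c, i ∈ B.I0) ∧
    (∀ i j : I, B.leTwo i j ↔ B.leTwo (B.einv i) (B.einv j)) ∧
    (∀ c : Set I, B.IsTwoCell c → ∀ i ∈ c, B.einv i ∈ c) ∧
    (∀ i : I, B.af (B.einv i) = B.af i) ∧
    (∀ i j : I, B.simTwo i j → B.af i = B.af j) := by
  refine ⟨?_, fun i j => BasedAlgebra.leTwo_einv_iff.symm, ?_, hB.af_einv,
    fun i j => hB.af_eq_of_simTwo⟩
  · rintro c ⟨i, rfl⟩
    obtain ⟨j, hj, hji⟩ := hB.exists_mem_I0_simTwo i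
    exact ⟨j, hji, hj⟩
  · rintro c ⟨i₀, rfl⟩ i hi
    exact (hB.einv_simTwo i).trans hi
end
end

section
/- Let 𝔄 be an excellent based A-algebra, let k be an algebraically closed field of characteristic 0, and let J = k ⊗_ℤ 𝔄^∞. Let i ∈ I, and suppose there exists a finite-dimensional J-module M such that the trace of t_i on M is nonzero. Then i ∼_left i^!, i.e. i and i^! lie in the same left cell of I. -/
/-
Since `1 = ∑_{d ∈ I₀} t_d`, the trace of `t_i` is the sum of the traces of the `t_i t_d`, so one
of these, for some `d ∈ I₀`, is nonzero. Then both `t_i t_d` and (by cyclicity of the trace)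
`t_d t_i` are nonzero, so some `h*_{i,d,j}` and some `h*_{d,i,j'}` are nonzero, and Q6 gives
`i ∼_left d^! = d` and `d ∼_left i^!`.
-/

open scoped Classical
open Finset

noncomputable section

/-- Scalar action by `a : J` on a `J`-module `M`, as a `k`-linear endomorphism of `M`. -/
def smulEnd (k J M : Type) [CommSemiring k] [Ring J] [Algebra k J] [AddCommGroup M]
    [Module J M] [Module k M] [IsScalarTower k J M] (a : J) : M →ₗ[k] M where
  toFun m := a • m
  map_add' := smul_add a
  map_smul' c m := by
    simp only [RingHom.id_apply]
    rw [← algebraMap_smul J c m, ← mul_smul, ← Algebra.commutes c a, mul_smul,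
      algebraMap_smul]

section smulEnd

variable {k J M : Type} [CommRing k] [Ring J] [Algebra k J] [AddCommGroup M] [Module J M]
  [Module k M] [IsScalarTower k J M]

theorem smulEnd_eq_lsmul (a : J) : smulEnd k J M a = Algebra.lsmul k k M a := rfl

theorem trace_smulEnd_mul_comm [Module.Free k M] [Module.Finite k M] (a b : J) :
    LinearMap.trace k M (smulEnd k J M (a * b)) = LinearMap.trace k M (smulEnd k J M (b * a)) := by
  simp only [smulEnd_eq_lsmul, map_mul]
  exact LinearMap.trace_mul_comm k _ _

theorem ne_zero_of_trace_smulEnd_ne_zero {a : J}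
    (h : LinearMap.trace k M (smulEnd k J M a) ≠ 0) : a ≠ 0 := by
  rintro rfl
  simp [smulEnd_eq_lsmul] at h

theorem exists_trace_smulEnd_mul_ne_zero {ι : Type} {s : Finset ι} {e : ι → J}
    (he : (1 : J) = ∑ d ∈ s, e d) {a : J} (h : LinearMap.trace k M (smulEnd k J M a) ≠ 0) :
    ∃ d ∈ s, LinearMap.trace k M (smulEnd k J M (a * e d)) ≠ 0 := by
  by_contra! hzero
  apply h
  rw [← mul_one a, he, mul_sum, smulEnd_eq_lsmul, map_sum, map_sum]
  exact sum_eq_zero fun d hd => hzero d hd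

end smulEnd

namespace BasedAlgebra

variable {I : Type} [Fintype I] [DecidableEq I] {B : BasedAlgebra I}

theorem simLeft_trans {i j l : I} (hij : B.simLeft i j) (hjl : B.simLeft j l) :
    B.simLeft i l :=
  ⟨hij.1.trans hjl.1, hjl.2.trans hij.2⟩

theorem Excellent.simLeft_einv_of_mul_ne_zero (hB : B.Excellent) {R J : Type} [Ring R]
    [Ring J] [Module R J] {t : I → J}
    (hmul : ∀ i i', t i * t i' = ∑ j, ((B.hstar i i' (B.einv j) : ℤ) : R) • t j)
    {a b : I} (hab : t a * t b ≠ 0) : B.simLeft a (B.einv b) := by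
  obtain ⟨j, hj⟩ : ∃ j, B.hstar a b (B.einv j) ≠ 0 := by
    by_contra! hzero
    exact hab (by simp [hmul, hzero])
  exact (hB.q6 _ _ _ hj).1

end BasedAlgebra

theorem statement14_general {I : Type} [Fintype I] [DecidableEq I]
    (B : BasedAlgebra I) (hB : B.Excellent)
    {k : Type} [Field k]
    {J : Type} [Ring J] [Algebra k J] (t : I → J)
    (hmul : ∀ i i', t i * t i' = ∑ j, ((B.hstar i i' (B.einv j) : ℤ) : k) • t j)
    (hone : (1 : J) = ∑ i ∈ B.I0, t i)
    (i : I)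
    {M : Type} [AddCommGroup M] [Module J M] [Module k M] [IsScalarTower k J M]
    [FiniteDimensional k M]
    (htr : LinearMap.trace k M (smulEnd k J M (t i)) ≠ 0) :
    B.simLeft i (B.einv i) := by
  obtain ⟨d, hd, htd⟩ := exists_trace_smulEnd_mul_ne_zero hone htr
  have htd' : LinearMap.trace k M (smulEnd k J M (t d * t i)) ≠ 0 := by
    rwa [trace_smulEnd_mul_comm]
  have hid : B.simLeft i d := B.I0_fixed d hd ▸
    hB.simLeft_einv_of_mul_ne_zero hmul (ne_zero_of_trace_smulEnd_ne_zero htd)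
  exact BasedAlgebra.simLeft_trans hid
    (hB.simLeft_einv_of_mul_ne_zero hmul (ne_zero_of_trace_smulEnd_ne_zero htd'))

/-- Let `𝔄` be an excellent based `A`-algebra, `k` an algebraically
closed field of characteristic `0`, and `J = k ⊗_ℤ 𝔄^∞` (realized as a `k`-algebra `J`
with basis `t : I → J` satisfying the multiplication rule of `𝔄^∞`). If some
finite-dimensional `J`-module `M` has `tr(t_i, M) ≠ 0`, then `i ∼_left i^!`. -/
theorem statement14 {I : Type} [Fintype I] [DecidableEq I]
    (B : BasedAlgebra I) (hB : B.Excellent)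
    {k : Type} [Field k] [IsAlgClosed k] [CharZero k]
    {J : Type} [Ring J] [Algebra k J] (t : I → J)
    (hli : LinearIndependent k t)
    (hsp : Submodule.span k (Set.range t) = ⊤)
    (hmul : ∀ i i', t i * t i' = ∑ j, ((B.hstar i i' (B.einv j) : ℤ) : k) • t j)
    (hone : (1 : J) = ∑ i ∈ B.I0, t i)
    (i : I)
    {M : Type} [AddCommGroup M] [Module J M] [Module k M] [IsScalarTower k J M]
    [FiniteDimensional k M]
    (htr : LinearMap.trace k M (smulEnd k J M (t i)) ≠ 0) :
    B.simLeft i (B.einv i) :=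
  statement14_general B hB t hmul hone i htr
end
end
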